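/- arXiv:0906.4424 — 4 statements merged into one kernel-verified Lean document; each statement's English description precedes it below -/
import Mathlib

section
/- Let G be a finite group and H₁, H₂ subgroups of G. Then H₁ and H₂ are Gassmann equivalent in G if and only if the permutation representations of G on the coset spaces are isomorphic over ℚ, i.e. if and only if ℚ[G/H₁] and ℚ[G/H₂] are isomorphic as ℚ-linear representations of G (isomorphic objects of Rep ℚ G, where ℚ[G/X] is the representation Rep.ofMulAction ℚ G (G ⧸ X)). -/
/-!
Both conditions are statements about the permutation characters `g ↦ #Fix_{G/H}(g)`.
Counting `{x ∈ G | x⁻¹ g x ∈ H}` in two ways gives `#Fix_{G/H}(g) · |H| = |H ∩ gᴳ| · |C_G(g)|`,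
so Gassmann equivalence is equality of the permutation characters (the orders of `H₁` and `H₂`
agree under either condition). Over `ℚ` a representation of a finite group is determined by its
character: by Maschke the group algebra is semisimple, `⟨χ_T, χ_M⟩ = dim Hom_G(T, M)`, and two
semisimple modules receiving equally many maps from every simple module are isomorphic (split off
a common simple summand and induct on the dimension).
-/

/-- Two subgroups `H₁`, `H₂` of a group `G` are *Gassmann equivalent* in `G` if every
conjugacy class of `G` meets `H₁` and `H₂` in the same number of elements. -/
def Subgroup.IsGassmannEquivalent {G : Type} [Group G] (H₁ H₂ : Subgroup G) : Prop :=
  ∀ g : G, Nat.card {h : G // h ∈ H₁ ∧ IsConj g h} = Nat.card {h : G // h ∈ H₂ ∧ IsConj g h}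

open Module MulAction

universe u

theorem MulAction.card_smul_mem_eq_card_orbit_inter_mul_card_stabilizer {α β : Type*} [Group α]
    [MulAction α β] (b : β) (s : Set β) :
    Nat.card {a : α // a • b ∈ s} = Nat.card ↥(orbit α b ∩ s) * Nat.card (stabilizer α b) := by
  let t : Set (α ⧸ stabilizer α b) := ofQuotientStabilizer α b ⁻¹' s
  have ht : t ≃ ↥(orbit α b ∩ s) :=
    ((orbitEquivQuotientStabilizer α b).symm.subtypeEquiv fun _ => Iff.rfl).trans
      (Equiv.subtypeSubtypeEquivSubtypeInter _ (· ∈ s))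
  rw [← Nat.card_congr ht, mul_comm, ← Nat.card_prod,
    ← Nat.card_congr (QuotientGroup.preimageMkEquivSubgroupProdSet _ t)]
  rfl

namespace Subgroup

variable {G : Type*} [Group G]

theorem card_conj_mem_eq_card_fixedBy_mul (H : Subgroup G) (g : G) :
    Nat.card {x : G // x⁻¹ * g * x ∈ H} = Nat.card (fixedBy (G ⧸ H) g) * Nat.card H := by
  rw [mul_comm, ← Nat.card_prod,
    ← Nat.card_congr (QuotientGroup.preimageMkEquivSubgroupProdSet H (fixedBy (G ⧸ H) g))]
  refine Nat.card_congr (Equiv.subtypeEquivRight fun x => ?_)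
  rw [Set.mem_preimage, mem_fixedBy, MulAction.Quotient.smul_mk, smul_eq_mul, eq_comm,
    QuotientGroup.eq, mul_assoc]

theorem card_conj_mem_eq_card_isConj_mul (H : Subgroup G) (g : G) :
    Nat.card {x : G // x⁻¹ * g * x ∈ H} =
      Nat.card {h : G // h ∈ H ∧ IsConj g h} * Nat.card (stabilizer (ConjAct G) g) := by
  have e : {x : G // x⁻¹ * g * x ∈ H} ≃ {c : ConjAct G // c • g ∈ H} :=
    (Equiv.inv G).trans ConjAct.toConjAct.toEquiv |>.subtypeEquiv fun x => by
      simp [ConjAct.smul_def]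
  refine (Nat.card_congr e).trans
    ((card_smul_mem_eq_card_orbit_inter_mul_card_stabilizer g (H : Set G)).trans ?_)
  congr 1
  refine Nat.card_congr (Equiv.subtypeEquivRight fun h => ?_)
  rw [Set.mem_inter_iff, ConjAct.mem_orbit_conjAct, isConj_comm, and_comm]
  rfl

theorem sum_card_conj_mem [Fintype G] (H : Subgroup G) :
    ∑ g : G, Nat.card {x : G // x⁻¹ * g * x ∈ H} = Nat.card G * Nat.card H := by
  rw [← Nat.card_sigma, ← Nat.card_prod]
  exact Nat.card_congr
    { toFun p := (p.2, ⟨p.2.1⁻¹ * p.1 * p.2, p.2.2⟩)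
      invFun q := ⟨q.1 * q.2 * q.1⁻¹, q.1, by simp [mul_assoc]⟩
      left_inv p := by ext <;> simp [mul_assoc]
      right_inv q := by ext <;> simp [mul_assoc] }

variable [Finite G] (H₁ H₂ : Subgroup G)

theorem card_eq_of_forall_card_conj_mem_eq
    (h : ∀ g : G, Nat.card {x : G // x⁻¹ * g * x ∈ H₁} = Nat.card {x : G // x⁻¹ * g * x ∈ H₂}) :
    Nat.card H₁ = Nat.card H₂ := by
  have := Fintype.ofFinite G
  have hsum := sum_card_conj_mem H₁
  rw [Fintype.sum_congr _ _ h, sum_card_conj_mem] at hsum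
  exact Nat.eq_of_mul_eq_mul_left Nat.card_pos hsum.symm

theorem forall_card_conj_mem_eq_iff_forall_card_fixedBy_eq :
    (∀ g : G, Nat.card {x : G // x⁻¹ * g * x ∈ H₁} = Nat.card {x : G // x⁻¹ * g * x ∈ H₂}) ↔
      ∀ g : G, Nat.card (fixedBy (G ⧸ H₁) g) = Nat.card (fixedBy (G ⧸ H₂) g) := by
  refine ⟨fun h g => ?_, fun h g => ?_⟩
  · have hg := h g
    rwa [card_conj_mem_eq_card_fixedBy_mul, card_conj_mem_eq_card_fixedBy_mul,
      card_eq_of_forall_card_conj_mem_eq H₁ H₂ h, Nat.mul_left_inj Nat.card_pos.ne'] at hg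
  · have hone : Nat.card {x : G // x⁻¹ * 1 * x ∈ H₁} = Nat.card {x : G // x⁻¹ * 1 * x ∈ H₂} :=
      Nat.card_congr (Equiv.subtypeEquivRight fun x => by simp)
    have : Nonempty (fixedBy (G ⧸ H₂) (1 : G)) := ⟨⟨(1 : G), one_smul G _⟩⟩
    rw [card_conj_mem_eq_card_fixedBy_mul, card_conj_mem_eq_card_fixedBy_mul, h 1] at hone
    rw [card_conj_mem_eq_card_fixedBy_mul, card_conj_mem_eq_card_fixedBy_mul, h g,
      Nat.eq_of_mul_eq_mul_left Nat.card_pos hone]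

end Subgroup

theorem Subgroup.isGassmannEquivalent_iff_forall_card_conj_mem_eq {G : Type} [Group G] [Finite G]
    (H₁ H₂ : Subgroup G) :
    H₁.IsGassmannEquivalent H₂ ↔
      ∀ g : G, Nat.card {x : G // x⁻¹ * g * x ∈ H₁} = Nat.card {x : G // x⁻¹ * g * x ∈ H₂} :=
  forall_congr' fun g => by
    have := Fintype.ofFinite G
    rw [card_conj_mem_eq_card_isConj_mul, card_conj_mem_eq_card_isConj_mul,
      Nat.mul_left_inj Nat.card_pos.ne']

section SemisimpleModule

variable {k A : Type*} [Field k] [Ring A] [Algebra k A]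
variable {T T' M N : Type u} [AddCommGroup T] [Module A T] [AddCommGroup T'] [Module A T']
  [AddCommGroup M] [Module A M] [Module k M] [IsScalarTower k A M]
  [AddCommGroup N] [Module A N] [Module k N] [IsScalarTower k A N]

instance [FiniteDimensional k M] (p : Submodule A M) : FiniteDimensional k p :=
  .of_injective (p.subtype.restrictScalars k) p.injective_subtype

instance [Module k T] [IsScalarTower k A T] [FiniteDimensional k T] [FiniteDimensional k M] :
    FiniteDimensional k (T →ₗ[A] M) :=
  .of_injective (LinearMap.restrictScalarsₗ k A T M k) (LinearMap.restrictScalars_injective k)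

theorem finrank_linearMap_congr_left (e : T ≃ₗ[A] T') :
    finrank k (T →ₗ[A] M) = finrank k (T' →ₗ[A] M) :=
  (LinearEquiv.ofLinearMap (LinearMap.lcomp k M e.symm.toLinearMap)
    (LinearMap.lcomp k M e.toLinearMap) (by ext; simp) (by ext; simp)).finrank_eq

theorem finrank_linearMap_congr_right (e : M ≃ₗ[A] N) :
    finrank k (T →ₗ[A] M) = finrank k (T →ₗ[A] N) :=
  (LinearEquiv.ofLinearMap (LinearMap.compRight k e.toLinearMap)
    (LinearMap.compRight k e.symm.toLinearMap) (by ext; simp) (by ext; simp)).finrank_eq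

theorem finrank_add_finrank_eq_of_isCompl [FiniteDimensional k M] {p q : Submodule A M}
    (h : IsCompl p q) : finrank k p + finrank k q = finrank k M := by
  rw [← finrank_prod, ((Submodule.prodEquivOfIsCompl p q h).restrictScalars k).finrank_eq]

theorem finrank_linearMap_eq_add_of_isCompl [Module k T] [IsScalarTower k A T]
    [FiniteDimensional k T] [FiniteDimensional k M] {p q : Submodule A M} (h : IsCompl p q) :
    finrank k (T →ₗ[A] M) = finrank k (T →ₗ[A] p) + finrank k (T →ₗ[A] q) := by
  rw [finrank_linearMap_congr_right (Submodule.prodEquivOfIsCompl p q h).symm, ← finrank_prod,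
    (LinearMap.prodEquiv k).finrank_eq]

theorem finrank_linearMap_submodule_pos [FiniteDimensional k M] (S : Submodule A M)
    [Nontrivial S] : 0 < finrank k (S →ₗ[A] M) := by
  have : S.subtype ≠ 0 := by
    obtain ⟨s, hs⟩ := exists_ne (0 : S)
    exact fun h => hs (Subtype.ext (LinearMap.congr_fun h s))
  have : Nontrivial (S →ₗ[A] M) := nontrivial_of_ne _ _ this
  exact finrank_pos

theorem nonempty_linearEquiv_of_finrank_linearMap_eq [FiniteDimensional k M]
    [FiniteDimensional k N] [IsSemisimpleModule A M] [IsSemisimpleModule A N]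
    (h : ∀ (S : Type u) [AddCommGroup S] [Module A S] [Module k S] [IsScalarTower k A S]
      [FiniteDimensional k S] [IsSimpleModule A S],
      finrank k (S →ₗ[A] M) = finrank k (S →ₗ[A] N)) :
    Nonempty (M ≃ₗ[A] N) := by
  induction hn : finrank k M using Nat.strong_induction_on generalizing M N with
  | _ n ih =>
  rcases subsingleton_or_nontrivial M with hM | hM
  · suffices Subsingleton N from ⟨.ofSubsingleton M N⟩
    by_contra hN
    rw [not_subsingleton_iff_nontrivial] at hN
    obtain ⟨S, hS⟩ := IsSemisimpleModule.exists_simple_submodule A N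
    have := IsSimpleModule.nontrivial A S
    have hpos := finrank_linearMap_submodule_pos (k := k) S
    rw [← h S, finrank_zero_of_subsingleton] at hpos
    exact hpos.false
  · obtain ⟨S, hS⟩ := IsSemisimpleModule.exists_simple_submodule A M
    have := IsSimpleModule.nontrivial A S
    obtain ⟨M', hM'⟩ := exists_isCompl S
    have hpos := finrank_linearMap_submodule_pos (k := k) S
    rw [h S] at hpos
    obtain ⟨f, hf⟩ := Module.finrank_pos_iff_exists_ne_zero.mp hpos
    let eS := LinearEquiv.ofInjective f (LinearMap.injective_of_ne_zero hf)
    obtain ⟨N', hN'⟩ := exists_isCompl (LinearMap.range f)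
    have hlt : finrank k M' < n := by
      have := finrank_add_finrank_eq_of_isCompl (k := k) hM'
      have : 0 < finrank k S := finrank_pos
      omega
    have h' : ∀ (T : Type u) [AddCommGroup T] [Module A T] [Module k T] [IsScalarTower k A T]
        [FiniteDimensional k T] [IsSimpleModule A T],
        finrank k (T →ₗ[A] M') = finrank k (T →ₗ[A] N') := by
      intro T _ _ _ _ _ _
      have := h T
      rw [finrank_linearMap_eq_add_of_isCompl hM', finrank_linearMap_eq_add_of_isCompl hN',
        finrank_linearMap_congr_right eS] at this
      omega
    obtain ⟨e⟩ := ih _ hlt h' rfl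
    exact ⟨(Submodule.prodEquivOfIsCompl S M' hM').symm ≪≫ₗ eS.prodCongr e ≪≫ₗ
      Submodule.prodEquivOfIsCompl _ N' hN'⟩

end SemisimpleModule

namespace Representation

open scoped MonoidAlgebra

variable {k G : Type*} [Field k]

section Monoid

variable [Monoid G]

def ofModule'AsModuleEquiv (M : Type*) [AddCommGroup M] [Module k M] [Module k[G] M]
    [IsScalarTower k k[G] M] : (ofModule' (k := k) (G := G) M).asModule ≃ₗ[k[G]] M where
  __ := LinearEquiv.refl k M
  map_smul' r x := show (ofModule' M).asAlgebraHom r x = r • (show M from x) by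
    simp [ofModule', asAlgebraHom_def]

theorem character_ofMulAction {X : Type*} [MulAction G X] [Finite X] (g : G) :
    (ofMulAction k G X).character g = Nat.card (fixedBy X g) := by
  classical
  have := Fintype.ofFinite X
  rw [character, LinearMap.trace_eq_matrix_trace k (MonoidAlgebra.basis X k), Matrix.trace]
  simp [LinearMap.toMatrix_apply, MonoidAlgebra.basis, Finsupp.single_apply]

end Monoid

variable [Group G]

theorem finrank_linearMap_asModule_eq [Fintype G] [Invertible (Nat.card G : k)]
    {V : Type u} [AddCommGroup V] [Module k V] [FiniteDimensional k V] (ρ : Representation k G V)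
    (T : Type u) [AddCommGroup T] [Module k T] [Module k[G] T] [IsScalarTower k k[G] T]
    [FiniteDimensional k T] :
    (finrank k (T →ₗ[k[G]] ρ.asModule) : k) =
      (Nat.card G : k)⁻¹ * ∑ g, ρ.character g * (ofModule' (G := G) T).character g⁻¹ := by
  rw [finrank_linearMap_congr_left (k := k) (M := ρ.asModule) (ofModule'AsModuleEquiv T).symm,
    ← (IntertwiningMap.equivLinearMapAsModule (ofModule' (G := G) T) ρ).finrank_eq,
    card_inv_mul_sum_char_mul_char_eq_finrank]

theorem nonempty_equiv_iff_character_eq [CharZero k] [Finite G] {V W : Type u}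
    [AddCommGroup V] [Module k V] [FiniteDimensional k V]
    [AddCommGroup W] [Module k W] [FiniteDimensional k W]
    {ρ : Representation k G V} {σ : Representation k G W} :
    Nonempty (ρ.Equiv σ) ↔ ρ.character = σ.character := by
  refine ⟨fun ⟨e⟩ => char_iso e, fun h => ?_⟩
  have := Fintype.ofFinite G
  have : Invertible (Nat.card G : k) := invertibleOfNonzero (by simp)
  obtain ⟨e⟩ := nonempty_linearEquiv_of_finrank_linearMap_eq (k := k) (M := ρ.asModule)
    (N := σ.asModule) fun T _ _ _ _ _ _ => by
      exact_mod_cast (finrank_linearMap_asModule_eq ρ T).trans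
        (h ▸ finrank_linearMap_asModule_eq σ T).symm
  exact ⟨equivOfIso (Rep.equivalenceModuleMonoidAlgebra.fullyFaithfulFunctor.preimageIso
    e.toModuleIso : Rep.of ρ ≅ Rep.of σ)⟩

theorem nonempty_equiv_ofMulAction_iff [CharZero k] [Finite G] {X Y : Type u}
    [MulAction G X] [MulAction G Y] [Finite X] [Finite Y] :
    Nonempty ((ofMulAction k G X).Equiv (ofMulAction k G Y)) ↔
      ∀ g : G, Nat.card (fixedBy X g) = Nat.card (fixedBy Y g) := by
  simp [nonempty_equiv_iff_character_eq, funext_iff, character_ofMulAction]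

end Representation

/-- Gassmann equivalence of `H₁` and `H₂` in a finite group `G` is equivalent to the
permutation representations `ℚ[G/H₁]` and `ℚ[G/H₂]` being isomorphic. -/
theorem gassmann_iff_permutation_reps_iso (G : Type) [Group G] [Finite G]
    (H₁ H₂ : Subgroup G) :
    H₁.IsGassmannEquivalent H₂ ↔
      Nonempty (Rep.ofMulAction ℚ G (G ⧸ H₁) ≅ Rep.ofMulAction ℚ G (G ⧸ H₂)) := by
  rw [H₁.isGassmannEquivalent_iff_forall_card_conj_mem_eq,
    Subgroup.forall_card_conj_mem_eq_iff_forall_card_fixedBy_eq,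
    ← Representation.nonempty_equiv_ofMulAction_iff (k := ℚ)]
  exact ⟨fun ⟨e⟩ => ⟨Rep.mkIso e⟩, fun ⟨i⟩ => ⟨Representation.equivOfIso i⟩⟩
end

section
/- Let G be a finite group and let C and H be subgroups of G. Then the number of double cosets in C\G/H equals the dimension over ℚ of the subspace of C-invariant vectors of the permutation representation ℚ[G/H] (the representation of C obtained by restricting Rep.ofMulAction ℚ G (G ⧸ H) to C). -/
open Module

/-! The double coset `CgH` is the `C`-orbit of `gH` in `G/H`, so `C\G/H` is the orbit set of
`C` on `G/H`. A vector of the permutation module `ℚ[G/H]` is `C`-invariant exactly when its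
coefficient function is constant on `C`-orbits, so the invariants are the functions on that
orbit set, whose dimension is its cardinality. -/

namespace DoubleCoset

variable {G : Type*} [Group G] (C H : Subgroup G)

theorem setoid_iff_orbitRel {a b : G} :
    setoid C H a b ↔ MulAction.orbitRel C (G ⧸ H) a b := by
  rw [rel_iff, MulAction.orbitRel_apply, MulAction.mem_orbit_iff]
  constructor
  · rintro ⟨c, hc, h, hh, rfl⟩
    refine ⟨⟨c, hc⟩⁻¹, ?_⟩
    rw [QuotientGroup.mk_mul_of_mem _ hh]
    exact congrArg _ (inv_mul_cancel_left c a)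
  · rintro ⟨⟨c, hc⟩, hcb⟩
    have hh : (c * b)⁻¹ * a ∈ H := QuotientGroup.eq.1 hcb
    exact ⟨c⁻¹, inv_mem hc, ((c * b)⁻¹ * a)⁻¹, inv_mem hh, by group⟩

noncomputable def quotientEquivOrbitRelQuotient :
    Quotient (C : Set G) H ≃ MulAction.orbitRel.Quotient C (G ⧸ H) :=
  (Quotient.congrRight fun _ _ => (setoid_iff_orbitRel C H).trans Quotient.eq.symm).trans
    (Setoid.quotientKerEquivOfSurjective _ <|
      Quotient.mk_surjective.comp QuotientGroup.mk_surjective)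

end DoubleCoset

namespace Representation

variable {k G X : Type*} [CommRing k] [Group G] [MulAction G X]

theorem mem_invariants_ofMulAction_iff {f : MonoidAlgebra k X} :
    f ∈ invariants (ofMulAction k G X) ↔ ∀ (g : G) (x : X), f.coeff (g • x) = f.coeff x := by
  simp only [mem_invariants, MonoidAlgebra.coeff_injective.eq_iff.symm, Finsupp.ext_iff,
    coeff_ofMulAction]
  exact ⟨fun h g => by simpa using h g⁻¹, fun h g => h g⁻¹⟩

theorem ofMulAction_comp_subtype (S : Subgroup G) :
    (ofMulAction k G X).comp S.subtype = ofMulAction k S X :=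
  rfl

variable (k G X) in
noncomputable def invariantsOfMulActionEquiv [Finite X] :
    invariants (ofMulAction k G X) ≃ₗ[k] (MulAction.orbitRel.Quotient G X → k) where
  toFun f := Quotient.lift f.1.coeff <| by
    rintro _ x ⟨g, rfl⟩
    exact mem_invariants_ofMulAction_iff.1 f.2 g x
  map_add' _ _ := funext <| Quotient.ind fun _ => rfl
  map_smul' _ _ := funext <| Quotient.ind fun _ => rfl
  invFun φ := ⟨MonoidAlgebra.ofCoeff (Finsupp.equivFunOnFinite.symm (φ ∘ Quotient.mk _)),
    mem_invariants_ofMulAction_iff.2 fun g x =>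
      congrArg φ (MulAction.orbitRel.Quotient.quotient_smul_eq)⟩
  left_inv _ := Subtype.ext <| MonoidAlgebra.coeff_injective <| Finsupp.ext fun _ => rfl
  right_inv φ := funext <| Quotient.ind fun _ => rfl

theorem finrank_invariants_ofMulAction [StrongRankCondition k] [Finite X] :
    finrank k (invariants (ofMulAction k G X)) = Nat.card (MulAction.orbitRel.Quotient G X) := by
  have := Fintype.ofFinite (MulAction.orbitRel.Quotient G X)
  rw [(invariantsOfMulActionEquiv k G X).finrank_eq, finrank_fintype_fun_eq_card,
    Nat.card_eq_fintype_card]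

end Representation

/-- For subgroups `C`, `H` of a finite group `G`, the number of double cosets in `C\G/H`
equals the dimension over `ℚ` of the subspace of `C`-invariant vectors of the permutation
representation `ℚ[G/H]`. -/
theorem card_doset_eq_finrank_invariants (G : Type) [Group G] [Finite G]
    (C H : Subgroup G) :
    Nat.card (DoubleCoset.Quotient (C : Set G) (H : Set G)) =
      finrank ℚ (Representation.invariants
        ((Rep.ofMulAction ℚ G (G ⧸ H)).ρ.comp C.subtype)) := by
  rw [Nat.card_congr (DoubleCoset.quotientEquivOrbitRelQuotient C H), Rep.of_ρ, Representation.ofMulAction_comp_subtype]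
  exact Representation.finrank_invariants_ofMulAction.symm
end

section
/- Let a, b : ℕ → ℂ be sequences such that the Dirichlet series L(a,s) = Σ_{n≥1} a(n) n^{-s} and L(b,s) = Σ_{n≥1} b(n) n^{-s} are both convergent (summable) at some real point s₀. If L(a,j) = L(b,j) for all sufficiently large natural numbers j, then a(n) = b(n) for all n ≥ 1. -/
/-!
Multiplying by `n ^ x` and letting `x → ∞`, the L-series of a sequence vanishing below `n`
tends to its `n`-th coefficient (`LSeries.tendsto_cpow_mul_atTop`). Along the natural numbers
this limit is still determined, so L-series vanishing at all large integers have vanishing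
coefficients, by strong induction on `n`.
-/

open Filter

namespace LSeries

lemma eventually_LSeriesSummable_natCast {f : ℕ → ℂ} (hf : abscissaOfAbsConv f < ⊤) :
    ∀ᶠ j : ℕ in atTop, LSeriesSummable f j := by
  obtain ⟨y, hfy, hy⟩ := exists_between hf
  lift y to ℝ using ⟨hy.ne, ((OrderBot.bot_le _).trans_lt hfy).ne'⟩
  filter_upwards [tendsto_natCast_atTop_atTop.eventually_ge_atTop y] with j hj
  refine LSeriesSummable_of_abscissaOfAbsConv_lt_re ?_
  simpa using hfy.trans_le (EReal.coe_le_coe_iff.mpr hj)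

lemma eq_zero_of_eventually_LSeries_natCast_eq_zero {f : ℕ → ℂ} (hf : abscissaOfAbsConv f < ⊤)
    (h : ∀ᶠ j : ℕ in atTop, LSeries f j = 0) {n : ℕ} (hn : n ≠ 0) : f n = 0 := by
  -- `f 0` never enters an L-series, so replace it by `0` to start the induction.
  let F (m : ℕ) : ℂ := if m = 0 then 0 else f m
  have hF {m : ℕ} (hm : m ≠ 0) : F m = f m := if_neg hm
  have hFa : abscissaOfAbsConv F < ⊤ := abscissaOfAbsConv_congr hF ▸ hf
  suffices ∀ m, F m = 0 from (hF hn).symm.trans (this n)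
  intro m
  induction m using Nat.strong_induction_on with | _ m ih =>
  cases m with
  | zero => rfl
  | succ m =>
    have hlim := (tendsto_cpow_mul_atTop (fun k hk ↦ ih k (Nat.lt_succ_of_le hk)) hFa).comp
      tendsto_natCast_atTop_atTop
    refine tendsto_nhds_unique hlim (tendsto_const_nhds.congr' ?_)
    filter_upwards [h] with j hj
    simp [LSeries_congr hF, hj]

lemma eq_of_eventually_LSeries_natCast_eq {f g : ℕ → ℂ} (hf : abscissaOfAbsConv f < ⊤)
    (hg : abscissaOfAbsConv g < ⊤) (h : ∀ᶠ j : ℕ in atTop, LSeries f j = LSeries g j)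
    {n : ℕ} (hn : n ≠ 0) : f n = g n := by
  have hsub : ∀ᶠ j : ℕ in atTop, LSeries (f - g) j = 0 := by
    filter_upwards [h, eventually_LSeriesSummable_natCast hf,
      eventually_LSeriesSummable_natCast hg] with j hj hfj hgj
    rw [LSeries_sub hfj hgj, hj, sub_self]
  have hfg : abscissaOfAbsConv (f - g) < ⊤ :=
    (abscissaOfAbsConv_sub_le f g).trans_lt (max_lt hf hg)
  exact sub_eq_zero.mp (eq_zero_of_eventually_LSeries_natCast_eq_zero hfg hsub hn)

end LSeries

/-- (Uniqueness theorem for Dirichlet series, Hardy–Riesz Theorem 6.)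
If two Dirichlet series are summable at some real point and agree at all sufficiently
large natural number arguments, then their coefficients agree (from `n = 1` on). -/
theorem dirichlet_series_coeff_eq_of_eventually_eq (a b : ℕ → ℂ) (s₀ : ℝ)
    (ha : LSeriesSummable a s₀) (hb : LSeriesSummable b s₀)
    (h : ∃ J : ℕ, ∀ j : ℕ, J ≤ j → LSeries a j = LSeries b j) :
    ∀ n : ℕ, 1 ≤ n → a n = b n := by
  intro n hn
  exact LSeries.eq_of_eventually_LSeries_natCast_eq
    (ha.abscissaOfAbsConv_le.trans_lt (EReal.coe_lt_top _))
    (hb.abscissaOfAbsConv_le.trans_lt (EReal.coe_lt_top _)) (eventually_atTop.mpr h) (by omega)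
end

section
/- Let p be a prime number and n a natural number. Let C, C' : ℕ → ℕ be functions with C(0) = C'(0) = 0, C(f) = C'(f) = 0 for f > n, and C(f) < p and C'(f) < p for all f. If the formal power series identity ∏_{f=1}^{n} (1 - X^f)^{C(f)} = ∏_{f=1}^{n} (1 - X^f)^{C'(f)} holds in the power series ring (ZMod p)⟦X⟧, then C = C'. -/
/-!
Let `m` be the least index with `C m ≠ C' m`. The factors with `f < m` agree on both sides and are
units, so they cancel. Every remaining factor is `≡ 1` modulo `X ^ (m + 1)` except
`(1 - X ^ m) ^ c ≡ 1 - c X ^ m`, so the coefficient of `X ^ m` is `-C m` on one side and `-C' m`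
on the other. Hence `C m ≡ C' m (mod p)`, and both are `< p`.
-/

open PowerSeries

theorem one_sub_pow_of_sq_eq_zero {R : Type*} [CommRing R] {y : R} (hy : y ^ 2 = 0) (c : ℕ) :
    (1 - y) ^ c = 1 - c * y := by
  induction c with
  | zero => simp
  | succ c ih =>
    rw [pow_succ, ih]
    push_cast
    linear_combination (c : R) * hy

namespace PowerSeries

variable {R : Type*} [CommRing R]

theorem coeff_eq_of_mk_eq {m : ℕ} {a b : R⟦X⟧}
    (h : Ideal.Quotient.mk (Ideal.span {(X : R⟦X⟧) ^ (m + 1)}) a =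
      Ideal.Quotient.mk (Ideal.span {(X : R⟦X⟧) ^ (m + 1)}) b) :
    coeff m a = coeff m b := by
  rw [Ideal.Quotient.eq, Ideal.mem_span_singleton, X_pow_dvd_iff] at h
  simpa [sub_eq_zero] using h m (Nat.lt_succ_self m)

theorem coeff_prod_one_sub_X_pow_pow {m : ℕ} (hm : 0 < m) {s : Finset ℕ} (hms : m ∈ s)
    (hs : ∀ f ∈ s, m ≤ f) (D : ℕ → ℕ) :
    coeff m (∏ f ∈ s, (1 - (X : R⟦X⟧) ^ f) ^ D f) = -(D m : R) := by
  set π := Ideal.Quotient.mk (Ideal.span {(X : R⟦X⟧) ^ (m + 1)})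
  have hX : π X ^ (m + 1) = 0 := by
    rw [← map_pow, Ideal.Quotient.eq_zero_iff_mem]
    exact Ideal.mem_span_singleton_self _
  have hX_pow {k : ℕ} (hk : m < k) : π X ^ k = 0 := pow_eq_zero_of_le hk hX
  have hprod : π (∏ f ∈ s, (1 - X ^ f) ^ D f) = π (1 - (D m : R⟦X⟧) * X ^ m) := by
    rw [map_prod, Finset.prod_eq_single_of_mem m hms]
    · simp only [map_pow, map_sub, map_one, map_mul, map_natCast]
      exact one_sub_pow_of_sq_eq_zero (by rw [← pow_mul]; exact hX_pow (by omega)) _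
    · intro f hf hfm
      simp [hX_pow (lt_of_le_of_ne (hs f hf) (Ne.symm hfm))]
  rw [coeff_eq_of_mk_eq hprod, ← map_natCast (C (R := R)), map_sub, coeff_C_mul_X_pow, coeff_one,
    if_neg hm.ne', if_pos rfl, zero_sub]

theorem natCast_eq_of_prod_one_sub_X_pow_pow_eq {s : Finset ℕ} (hs : ∀ f ∈ s, 0 < f)
    {C C' : ℕ → ℕ} {m : ℕ} (hms : m ∈ s) (hlt : ∀ f ∈ s, f < m → C f = C' f)
    (h : ∏ f ∈ s, (1 - (X : R⟦X⟧) ^ f) ^ C f = ∏ f ∈ s, (1 - (X : R⟦X⟧) ^ f) ^ C' f) :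
    (C m : R) = C' m := by
  have hhead : ∏ f ∈ s.filter (· < m), (1 - (X : R⟦X⟧) ^ f) ^ C f =
      ∏ f ∈ s.filter (· < m), (1 - (X : R⟦X⟧) ^ f) ^ C' f :=
    Finset.prod_congr rfl fun f hf => by
      rw [hlt f (Finset.mem_filter.1 hf).1 (Finset.mem_filter.1 hf).2]
  rw [← Finset.prod_filter_mul_prod_filter_not s (· < m),
    ← Finset.prod_filter_mul_prod_filter_not s (· < m) (fun f => (1 - (X : R⟦X⟧) ^ f) ^ C' f),
    hhead] at h
  have hunit : IsUnit (∏ f ∈ s.filter (· < m), (1 - (X : R⟦X⟧) ^ f) ^ C' f) := by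
    rw [isUnit_iff_constantCoeff, map_prod, Finset.prod_eq_one fun f hf => ?_]
    · exact isUnit_one
    · simp [zero_pow (hs f (Finset.mem_filter.1 hf).1).ne']
  have htail := congrArg (coeff m) (hunit.mul_left_cancel h)
  have hge : ∀ f ∈ s.filter (¬· < m), m ≤ f := fun f hf => not_lt.1 (Finset.mem_filter.1 hf).2
  have hm : m ∈ s.filter (¬· < m) := Finset.mem_filter.2 ⟨hms, lt_irrefl m⟩
  rwa [coeff_prod_one_sub_X_pow_pow (hs m hms) hm hge,
    coeff_prod_one_sub_X_pow_pow (hs m hms) hm hge, neg_inj] at htail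

end PowerSeries

theorem eq_of_prod_one_sub_pow_eq_general (p : ℕ) (n : ℕ) (C C' : ℕ → ℕ)
    (hC0 : C 0 = 0) (hC'0 : C' 0 = 0)
    (hCn : ∀ f, n < f → C f = 0) (hC'n : ∀ f, n < f → C' f = 0)
    (hCp : ∀ f, C f < p) (hC'p : ∀ f, C' f < p)
    (h : ∏ f ∈ Finset.Icc 1 n, (1 - (X : (ZMod p)⟦X⟧) ^ f) ^ C f =
         ∏ f ∈ Finset.Icc 1 n, (1 - (X : (ZMod p)⟦X⟧) ^ f) ^ C' f) :
    C = C' := by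
  funext m
  induction m using Nat.strong_induction_on with
  | _ m ih =>
  rcases Nat.eq_zero_or_pos m with rfl | hm
  · rw [hC0, hC'0]
  rcases lt_or_ge n m with hnm | hmn
  · rw [hCn m hnm, hC'n m hnm]
  have hcast : (C m : ZMod p) = C' m :=
    natCast_eq_of_prod_one_sub_X_pow_pow_eq (fun f hf => (Finset.mem_Icc.1 hf).1)
      (Finset.mem_Icc.2 ⟨hm, hmn⟩) (fun f _ hf => ih f hf) h
  simpa [ZMod.val_natCast_of_lt (hCp m), ZMod.val_natCast_of_lt (hC'p m)]
    using congrArg ZMod.val hcast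

/-- (Combinatorial core of Theorem 4.3.) Let `p` be prime and let `C, C' : ℕ → ℕ` vanish at
`0` and above `n`, and take values `< p`. If `∏_{f=1}^{n} (1 - X^f)^{C f}` and
`∏_{f=1}^{n} (1 - X^f)^{C' f}` agree as formal power series over `ZMod p`, then `C = C'`. -/
theorem eq_of_prod_one_sub_pow_eq (p : ℕ) (hp : p.Prime) (n : ℕ) (C C' : ℕ → ℕ)
    (hC0 : C 0 = 0) (hC'0 : C' 0 = 0)
    (hCn : ∀ f, n < f → C f = 0) (hC'n : ∀ f, n < f → C' f = 0)
    (hCp : ∀ f, C f < p) (hC'p : ∀ f, C' f < p)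
    (h : ∏ f ∈ Finset.Icc 1 n, (1 - (X : (ZMod p)⟦X⟧) ^ f) ^ C f =
         ∏ f ∈ Finset.Icc 1 n, (1 - (X : (ZMod p)⟦X⟧) ^ f) ^ C' f) :
    C = C' :=
  eq_of_prod_one_sub_pow_eq_general p n C C' hC0 hC'0 hCn hC'n hCp hC'p h
end
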